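/- If T', T'' both belong to the extended field extAnt(T) of the extended anticipation equivalence and have equal leaf sets, leafSet(T') = leafSet(T''), then T' and T'' are extended-anticipation equivalent: T' ≈̂_T T''. -/

import Mathlib

/-- Binary session types: output selection `⊕{lᵢ:Tᵢ}`, input branching `&{lᵢ:Tᵢ}`,
recursion `μt.T` (de Bruijn), variables, and `end`. Labels are natural numbers. -/
inductive SType : Type
  | out : List (Nat × SType) → SType
  | inp : List (Nat × SType) → SType
  | mu  : SType → SType
  | var : Nat → SType
  | done : SType

mutual
/-- The dual of a session type: swap `⊕` and `&`. -/
def SType.dual : SType → SType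
  | .out bs => .inp (dualBranches bs)
  | .inp bs => .out (dualBranches bs)
  | .mu t => .mu t.dual
  | .var n => .var n
  | .done => .done
def dualBranches : List (Nat × SType) → List (Nat × SType)
  | [] => []
  | (l, t) :: rest => (l, t.dual) :: dualBranches rest
end

mutual
/-- Substitution of `s` for the variable of de Bruijn index `k`. -/
def SType.subst (s : SType) : Nat → SType → SType
  | k, .out bs => .out (substBranches s k bs)
  | k, .inp bs => .inp (substBranches s k bs)
  | k, .mu t => .mu (SType.subst s (k+1) t)
  | k, .var n => if n = k then s else .var n
  | _, .done => .done
def substBranches (s : SType) : Nat → List (Nat × SType) → List (Nat × SType)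
  | _, [] => []
  | k, (l, t) :: rest => (l, SType.subst s k t) :: substBranches s k rest
end

mutual
/-- One-step unfolding of a session type. -/
def SType.unfold1 : SType → SType
  | .out bs => .out (unfold1Branches bs)
  | .inp bs => .inp (unfold1Branches bs)
  | .mu t => SType.subst (.mu t) 0 t
  | .var n => .var n
  | .done => .done
def unfold1Branches : List (Nat × SType) → List (Nat × SType)
  | [] => []
  | (l, t) :: rest => (l, t.unfold1) :: unfold1Branches rest
end

/-- `n`-fold unfolding. -/
def SType.unfoldN : Nat → SType → SType
  | 0, t => t
  | n+1, t => (SType.unfoldN n t).unfold1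

/-- A session type is single-out if every output selection has exactly one choice. -/
inductive SingleOut : SType → Prop
  | out {l t} : SingleOut t → SingleOut (.out [(l, t)])
  | inp {bs} : (∀ p ∈ bs, SingleOut p.2) → SingleOut (.inp bs)
  | mu {t} : SingleOut t → SingleOut (.mu t)
  | var {n} : SingleOut (.var n)
  | done : SingleOut .done

/-- A session type is single-in if every input branching has exactly one choice. -/
inductive SingleIn : SType → Prop
  | out {bs} : (∀ p ∈ bs, SingleIn p.2) → SingleIn (.out bs)
  | inp {l t} : SingleIn t → SingleIn (.inp [(l, t)])
  | mu {t} : SingleIn t → SingleIn (.mu t)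
  | var {n} : SingleIn (.var n)
  | done : SingleIn .done
inductive ICtx : Type
  | hole : Nat → ICtx
  | inp : List (Nat × ICtx) → ICtx

mutual
/-- Fill each hole `n` of the input context with `f n`. -/
def ICtx.fill : ICtx → (Nat → SType) → SType
  | .hole n, f => f n
  | .inp bs, f => .inp (fillBranches bs f)
def fillBranches : List (Nat × ICtx) → (Nat → SType) → List (Nat × SType)
  | [], _ => []
  | (l, A) :: rest, f => (l, A.fill f) :: fillBranches rest f
end

mutual
/-- The list of hole indices occurring in an input context. -/
def ICtx.holes : ICtx → List Nat
  | .hole n => [n]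
  | .inp bs => holesBranches bs
def holesBranches : List (Nat × ICtx) → List Nat
  | [] => []
  | (_, A) :: rest => A.holes ++ holesBranches rest
end

/-- Well-formed input context: holes are exactly `1..m` for some `m ≥ 1`,
each occurring exactly once. -/
def ICtx.WF (A : ICtx) : Prop :=
  ∃ m : Nat, 1 ≤ m ∧ A.holes.Perm (List.range' 1 m)

/-- `ClosedAt k T`: all free variables of `T` have index `< k`. -/
inductive ClosedAt : Nat → SType → Prop
  | out {k bs} : (∀ p ∈ bs, ClosedAt k p.2) → ClosedAt k (.out bs)
  | inp {k bs} : (∀ p ∈ bs, ClosedAt k p.2) → ClosedAt k (.inp bs)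
  | mu {k t} : ClosedAt (k+1) t → ClosedAt k (.mu t)
  | var {k n} : n < k → ClosedAt k (.var n)
  | done {k} : ClosedAt k .done

/-- A closed session type. -/
def SClosed (T : SType) : Prop := ClosedAt 0 T

/-- The variables occurring unguarded (i.e. not under an input or output) in `T`. -/
def SType.unguarded : SType → List Nat
  | .var n => [n]
  | .mu t => t.unguarded.filterMap (fun n => match n with | 0 => none | m+1 => some m)
  | _ => []

/-- Guardedness: in each `μt.T`, the variable `t` occurs only under an
input or output. -/
inductive SGuarded : SType → Prop
  | out {bs} : (∀ p ∈ bs, SGuarded p.2) → SGuarded (.out bs)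
  | inp {bs} : (∀ p ∈ bs, SGuarded p.2) → SGuarded (.inp bs)
  | mu {t} : 0 ∉ t.unguarded → SGuarded t → SGuarded (.mu t)
  | var {n} : SGuarded (.var n)
  | done : SGuarded .done

/-- `reach T`: the minimal set containing `T` and closed under consuming an
input branching, top-level unfolding of recursion, and consuming a single
output. -/
inductive Reach (T : SType) : SType → Prop
  | refl : Reach T T
  | inp {bs l t} : Reach T (.inp bs) → (l, t) ∈ bs → Reach T t
  | mu {t} : Reach T (.mu t) → Reach T (SType.subst (.mu t) 0 t)
  | out {l t} : Reach T (.out [(l, t)]) → Reach T t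

/-- `OutUnf T T'`: `T'` is the output unfolding `outUnf(T)` of `T`
(a partial operation, given relationally): recursion is unfolded in each
branch just enough to expose the first output selection. -/
inductive OutUnf : SType → SType → Prop
  | out {bs} : OutUnf (.out bs) (.out bs)
  | inp {bs bs' : List (Nat × SType)} :
      bs.length = bs'.length →
      (∀ (i : Nat) (h1 : i < bs.length) (h2 : i < bs'.length),
        (bs.get ⟨i, h1⟩).1 = (bs'.get ⟨i, h2⟩).1) →
      (∀ (i : Nat) (h1 : i < bs.length) (h2 : i < bs'.length),
        OutUnf (bs.get ⟨i, h1⟩).2 (bs'.get ⟨i, h2⟩).2) →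
      OutUnf (.inp bs) (.inp bs')
  | mu {t t'} : OutUnf (SType.subst (.mu t) 0 t) t' → OutUnf (.mu t) t'

/-- `R` is an `≈_T` relation: related types are in `reach T` and can, after
output unfolding, anticipate a common output label, with all pairs of
continuations again related. -/
def IsAntEqRel (T : SType) (R : SType → SType → Prop) : Prop :=
  (∀ a b, R a b → Reach T a ∧ Reach T b) ∧
  ∀ a b, R a b → ∃ (l : Nat) (A A' : ICtx) (f g : Nat → SType),
    A.WF ∧ A'.WF ∧
    OutUnf a (A.fill (fun k => .out [(l, f k)])) ∧
    OutUnf b (A'.fill (fun k => .out [(l, g k)])) ∧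
    (∀ i ∈ A.holes, ∀ j ∈ A'.holes, R (f i) (g j))

/-- `a ≈_T b`: `a` and `b` can anticipate the same infinite output sequence. -/
def AntEq (T a b : SType) : Prop := ∃ R, IsAntEqRel T R ∧ R a b

/-- `ant T`: the field of `≈_T`. -/
def AntField (T a : SType) : Prop := ∃ b, AntEq T a b ∨ AntEq T b a

/-- Output anticipation along a sequence of labels (relational presentation of
the partial function `antOut`). -/
inductive AntOut : SType → List Nat → SType → Prop
  | nil (T : SType) : AntOut T [] T
  | snoc {T : SType} {σ : List Nat} {U : SType} {l : Nat} {A : ICtx} {f : Nat → SType} :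
      AntOut T σ U → A.WF →
      OutUnf U (A.fill (fun k => .out [(l, f k)])) →
      AntOut T (σ ++ [l]) (A.fill f)

/-- `T` can infinitely anticipate outputs: there is an infinite label sequence
all of whose finite prefixes can be anticipated. -/
def AntOutInf (T : SType) : Prop :=
  ∃ s : Nat → Nat, ∀ n : Nat, ∃ U, AntOut T ((List.range n).map s) U

/-- `Leaf T u`: `u` belongs to the leaf set of `T`, i.e. `u` is not an input
branching and is reachable from the root of `T` through inputs only. -/
inductive Leaf : SType → SType → Prop
  | self {t} : (∀ bs, t ≠ .inp bs) → Leaf t t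
  | inp {bs l t u} : (l, t) ∈ bs → Leaf t u → Leaf (.inp bs) u

/-- The extended anticipation relation `a ≈̂_T b`. -/
def ExtAntEq (T a b : SType) : Prop :=
  ∃ (l : Nat) (A A' : ICtx) (f g : Nat → SType),
    A.WF ∧ A'.WF ∧
    OutUnf a (A.fill (fun k => .out [(l, f k)])) ∧
    OutUnf b (A'.fill (fun k => .out [(l, g k)])) ∧
    (∀ i ∈ A.holes, ∀ j ∈ A'.holes, AntEq T (f i) (g j))

/-- `extAnt T`: the field of `≈̂_T`. -/
def ExtAntField (T a : SType) : Prop := ∃ b, ExtAntEq T a b ∨ ExtAntEq T b a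


section Aux

theorem mem_fillBranches {h : Nat → SType} : ∀ {bs : List (Nat × ICtx)} {l : Nat} {t : SType},
    (l, t) ∈ fillBranches bs h ↔ ∃ A, (l, A) ∈ bs ∧ t = A.fill h := by
  intro bs
  induction bs with
  | nil => intro l t; simp [fillBranches]
  | cons p rest ih =>
    obtain ⟨l', A'⟩ := p
    intro l t
    simp only [fillBranches, List.mem_cons, Prod.mk.injEq, ih]
    constructor
    · rintro (⟨rfl, rfl⟩ | ⟨A, hA, rfl⟩)
      · exact ⟨A', Or.inl ⟨rfl, rfl⟩, rfl⟩
      · exact ⟨A, Or.inr hA, rfl⟩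
    · rintro ⟨A, (⟨rfl, rfl⟩ | hA), rfl⟩
      · exact Or.inl ⟨rfl, rfl⟩
      · exact Or.inr ⟨A, hA, rfl⟩

theorem mem_holesBranches {k : Nat} : ∀ {bs : List (Nat × ICtx)},
    k ∈ holesBranches bs ↔ ∃ l A, (l, A) ∈ bs ∧ k ∈ A.holes := by
  intro bs
  induction bs with
  | nil => simp [holesBranches]
  | cons p rest ih =>
    obtain ⟨l', A'⟩ := p
    simp only [holesBranches, List.mem_append, List.mem_cons, Prod.mk.injEq, ih]
    constructor
    · rintro (hk | ⟨l, A, hA, hk⟩)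
      · exact ⟨l', A', Or.inl ⟨rfl, rfl⟩, hk⟩
      · exact ⟨l, A, Or.inr hA, hk⟩
    · rintro ⟨l, A, (⟨rfl, rfl⟩ | hA), hk⟩
      · exact Or.inl hk
      · exact Or.inr ⟨l, A, hA, hk⟩

theorem leaf_of_noninp {t w : SType} (ht : ∀ bs, t ≠ SType.inp bs) (h : Leaf t w) : w = t := by
  cases h with
  | self _ => rfl
  | inp hmem _ => exact absurd rfl (ht _)

theorem leafFill (h : Nat → SType) (hh : ∀ k bs, h k ≠ SType.inp bs) :
    ∀ (A : ICtx) (w : SType), Leaf (A.fill h) w ↔ ∃ k ∈ A.holes, w = h k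
  | .hole n, w => by
    simp only [ICtx.fill, ICtx.holes, List.mem_singleton]
    constructor
    · intro hl
      exact ⟨n, rfl, leaf_of_noninp (hh n) hl⟩
    · rintro ⟨k, rfl, rfl⟩
      exact Leaf.self (hh _)
  | .inp bs, w => by
    simp only [ICtx.fill, ICtx.holes]
    constructor
    · intro hl
      cases hl with
      | self hne => exact absurd rfl (hne _)
      | inp hmem hlw =>
        obtain ⟨A, hA, rfl⟩ := mem_fillBranches.1 hmem
        obtain ⟨k, hk, rfl⟩ := (leafFill h hh A w).1 hlw
        exact ⟨k, mem_holesBranches.2 ⟨_, A, hA, hk⟩, rfl⟩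
    · rintro ⟨k, hk, rfl⟩
      obtain ⟨l, A, hA, hkA⟩ := mem_holesBranches.1 hk
      exact Leaf.inp (mem_fillBranches.2 ⟨A, hA, rfl⟩) ((leafFill h hh A (h k)).2 ⟨k, hkA, rfl⟩)
termination_by A _ => sizeOf A
decreasing_by
  all_goals
    have := List.sizeOf_lt_of_mem hA
    simp only [ICtx.inp.sizeOf_spec] at *
    simp at this ⊢ <;> omega

theorem outUnf_det {a x : SType} (h : OutUnf a x) : ∀ y, OutUnf a y → x = y := by
  induction h with
  | out =>
    intro y hy; cases hy; rfl
  | @inp bs bs' hlen hlab hrec ih =>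
    intro y hy
    cases hy with
    | @inp _ bs'' hlen2 hlab2 hrec2 =>
      have hLen : bs'.length = bs''.length := by omega
      have : bs' = bs'' := by
        apply List.ext_get hLen
        intro i h1 h2
        have hi : i < bs.length := by omega
        have hl := (hlab i hi h1).symm.trans (hlab2 i hi h2)
        have hs := ih i hi h1 _ (hrec2 i hi h2)
        exact Prod.ext hl hs
      rw [this]
  | mu h ih =>
    intro y hy
    cases hy with
    | mu h2 => exact ih _ h2

theorem outUnf_leaf_fwd {a x : SType} (h : OutUnf a x) :
    ∀ u, Leaf a u → ∃ v, OutUnf u v ∧ ∀ w, Leaf v w → Leaf x w := by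
  induction h with
  | out =>
    intro u hu
    cases hu with
    | self _ => exact ⟨_, OutUnf.out, fun _ hw => hw⟩
  | @inp bs bs' hlen hlab hrec ih =>
    intro u hu
    cases hu with
    | self hne => exact absurd rfl (hne _)
    | inp hmem hu' =>
      obtain ⟨i, hi⟩ := List.get_of_mem hmem
      have h2 : (i : Nat) < bs'.length := by omega
      obtain ⟨v, hv, hsub⟩ := ih i.1 i.isLt h2 u (by simp only [Fin.eta, hi]; exact hu')
      refine ⟨v, hv, fun w hw => ?_⟩
      refine Leaf.inp (bs := bs') (l := (bs'.get ⟨i.1, h2⟩).1) (t := (bs'.get ⟨i.1, h2⟩).2)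
        ?_ (hsub w hw)
      have := List.get_mem bs' ⟨i.1, h2⟩
      simpa using this
  | mu h ih =>
    intro u hu
    cases hu with
    | self _ => exact ⟨_, OutUnf.mu h, fun _ hw => hw⟩

theorem outUnf_leaf_bwd {a x : SType} (h : OutUnf a x) :
    ∀ w, Leaf x w → ∃ u v, Leaf a u ∧ OutUnf u v ∧ Leaf v w := by
  induction h with
  | @out bs =>
    intro w hw
    exact ⟨_, _, Leaf.self (fun _ he => SType.noConfusion he), OutUnf.out, hw⟩
  | @inp bs bs' hlen hlab hrec ih =>
    intro w hw
    cases hw with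
    | self hne => exact absurd rfl (hne _)
    | inp hmem hw' =>
      obtain ⟨i, hi⟩ := List.get_of_mem hmem
      have h1 : (i : Nat) < bs.length := by omega
      obtain ⟨u, v, hu, huv, hvw⟩ := ih i.1 h1 i.isLt w (by simp only [Fin.eta, hi]; exact hw')
      refine ⟨u, v, ?_, huv, hvw⟩
      refine Leaf.inp (bs := bs) (l := (bs.get ⟨i.1, h1⟩).1) (t := (bs.get ⟨i.1, h1⟩).2) ?_ hu
      have := List.get_mem bs ⟨i.1, h1⟩
      simpa using this
  | @mu t x' h ih =>
    intro w hw
    exact ⟨_, _, Leaf.self (fun _ he => SType.noConfusion he), OutUnf.mu h, hw⟩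

theorem wf_nonempty {A : ICtx} (h : A.WF) : ∃ k, k ∈ A.holes := by
  obtain ⟨m, hm, hp⟩ := h
  have hlen : A.holes.length = m := by rw [hp.length_eq, List.length_range']
  cases hA : A.holes with
  | nil => rw [hA] at hlen; simp at hlen; omega
  | cons a t => exact ⟨a, hA ▸ (List.mem_cons_self : a ∈ a :: t)⟩

theorem noninp (l : Nat) (f : Nat → SType) :
    ∀ k bs, (fun k => SType.out [(l, f k)]) k ≠ SType.inp bs :=
  fun _ _ h => SType.noConfusion h

theorem antEq_symm {T a b : SType} (h : AntEq T a b) : AntEq T b a := by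
  obtain ⟨R, ⟨hR1, hR2⟩, hab⟩ := h
  refine ⟨fun x y => R y x, ⟨?_, ?_⟩, hab⟩
  · intro x y hxy; exact ⟨(hR1 y x hxy).2, (hR1 y x hxy).1⟩
  · intro x y hxy
    obtain ⟨l, A, A', f, g, wA, wA', oy, ox, cross⟩ := hR2 y x hxy
    exact ⟨l, A', A, g, f, wA', wA, ox, oy, fun i hi j hj => cross j hj i hi⟩

theorem antEq_trans {T a b c : SType} (h1 : AntEq T a b) (h2 : AntEq T b c) : AntEq T a c := by
  obtain ⟨R, ⟨hR1, hR2⟩, hab⟩ := h1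
  obtain ⟨S, ⟨hS1, hS2⟩, hbc⟩ := h2
  refine ⟨fun x z => ∃ y, R x y ∧ S y z, ⟨?_, ?_⟩, ⟨b, hab, hbc⟩⟩
  · rintro x z ⟨y, hxy, hyz⟩
    exact ⟨(hR1 x y hxy).1, (hS1 y z hyz).2⟩
  · rintro x z ⟨y, hxy, hyz⟩
    obtain ⟨l, A, A', f, g, wA, wA', ox, oy, cross1⟩ := hR2 x y hxy
    obtain ⟨l2, B, B', f2, g2, wB, wB', oy2, oz, cross2⟩ := hS2 y z hyz
    have heq := outUnf_det oy _ oy2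
    obtain ⟨i0, hi0⟩ := wf_nonempty wA'
    have hleaf1 : Leaf (A'.fill fun k => .out [(l, g k)]) (.out [(l, g i0)]) :=
      (leafFill _ (noninp l g) A' _).2 ⟨i0, hi0, rfl⟩
    rw [heq] at hleaf1
    obtain ⟨j0, hj0, hout⟩ := (leafFill _ (noninp l2 f2) B _).1 hleaf1
    simp only [SType.out.injEq, List.cons.injEq, Prod.mk.injEq, and_true] at hout
    obtain ⟨hl, hg⟩ := hout
    refine ⟨l, A, B', f, g2, wA, wB', ox, ?_, ?_⟩
    · rw [hl]; exact oz
    · intro i hi j hj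
      refine ⟨g i0, cross1 i hi i0 hi0, ?_⟩
      rw [hg]; exact cross2 j0 hj0 j hj

theorem extAnt_half {T T' : SType} (h1 : ExtAntField T T') :
    ∃ (l : Nat) (A : ICtx) (f : Nat → SType) (c : SType), A.WF ∧
      OutUnf T' (A.fill fun k => .out [(l, f k)]) ∧
      ∀ i ∈ A.holes, AntEq T (f i) c := by
  obtain ⟨b, hb | hb⟩ := h1
  · obtain ⟨l, A, A', f, g, wA, wA', o1, o2, cross⟩ := hb
    obtain ⟨j0, hj0⟩ := wf_nonempty wA'
    exact ⟨l, A, f, g j0, wA, o1, fun i hi => cross i hi j0 hj0⟩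
  · obtain ⟨l, A, A', f, g, wA, wA', o1, o2, cross⟩ := hb
    obtain ⟨i0, hi0⟩ := wf_nonempty wA
    exact ⟨l, A', g, f i0, wA', o2, fun j hj => antEq_symm (cross i0 hi0 j hj)⟩

end Aux

/-- if `T'` and `T''` both belong to `extAnt T` and have equal
leaf sets, then `T' ≈̂_T T''`. -/
theorem extAntEq_of_leafSet_eq (T T' T'' : SType) (hso : SingleOut T)
    (h1 : ExtAntField T T') (h2 : ExtAntField T T'')
    (hleaf : ∀ u, Leaf T' u ↔ Leaf T'' u) : ExtAntEq T T' T'' := by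
  obtain ⟨l1, A1, f1, c1, wA1, o1, cr1⟩ := extAnt_half h1
  obtain ⟨l2, A2, g2, c2, wA2, o2, cr2⟩ := extAnt_half h2
  obtain ⟨k0, hk0⟩ := wf_nonempty wA1
  have hX' : Leaf (A1.fill fun k => .out [(l1, f1 k)]) (.out [(l1, f1 k0)]) :=
    (leafFill _ (noninp l1 f1) A1 _).2 ⟨k0, hk0, rfl⟩
  obtain ⟨u, v, hu, huv, hvw⟩ := outUnf_leaf_bwd o1 _ hX'
  obtain ⟨v', hv', hsub⟩ := outUnf_leaf_fwd o2 u ((hleaf u).1 hu)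
  have hvv : v' = v := outUnf_det hv' _ huv
  have hX'' : Leaf (A2.fill fun k => .out [(l2, g2 k)]) (.out [(l1, f1 k0)]) :=
    hsub _ (hvv ▸ hvw)
  obtain ⟨j0, hj0, heq⟩ := (leafFill _ (noninp l2 g2) A2 _).1 hX''
  simp only [SType.out.injEq, List.cons.injEq, Prod.mk.injEq, and_true] at heq
  obtain ⟨hl, hg⟩ := heq
  refine ⟨l1, A1, A2, f1, g2, wA1, wA2, o1, ?_, ?_⟩
  · rw [hl]; exact o2
  · intro i hi j hj
    have e1 : AntEq T (f1 i) c1 := cr1 i hi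
    have e2 : AntEq T c1 (f1 k0) := antEq_symm (cr1 k0 hk0)
    have e3 : AntEq T (f1 k0) c2 := by rw [hg]; exact cr2 j0 hj0
    have e4 : AntEq T c2 (g2 j) := antEq_symm (cr2 j hj)
    exact antEq_trans (antEq_trans (antEq_trans e1 e2) e3) e4
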